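/- arXiv:2406.07317 — 3 statements merged into one kernel-verified Lean document; each statement's English description precedes it below -/
import Mathlib

section
/- Let n ≥ 1 be an integer, ε > 0, and let u : ℝ² → ℝ^{n+1} be a smooth solution of the Ginzburg–Landau equation −Δu = (1/ε²)(1−|u|²)u on all of ℝ² such that ∫_{ℝ²} (1−|u(x)|²)² dx < ∞. Then |u(x)| ≤ 1 for every x ∈ ℝ². -/
open MeasureTheory Metric Real

noncomputable section

/-- Euclidean plane. -/
abbrev E2 : Type := EuclideanSpace ℝ (Fin 2)

/-- Partial derivative in the `k`-th coordinate direction. -/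
def pd {F : Type} [NormedAddCommGroup F] [NormedSpace ℝ F]
    (k : Fin 2) (f : E2 → F) (x : E2) : F :=
  fderiv ℝ f x (EuclideanSpace.single k 1)

/-- Euclidean Laplacian, acting componentwise. -/
def lap {F : Type} [NormedAddCommGroup F] [NormedSpace ℝ F]
    (f : E2 → F) (x : E2) : F :=
  pd 0 (pd 0 f) x + pd 1 (pd 1 f) x

section GLAux

open Filter RealInnerProductSpace

/-- 1-D second derivative test at an interior local maximum. -/
lemma GL.second_deriv_test {g : ℝ → ℝ} {a : ℝ}
    (hg : ∀ᶠ t in nhds (0:ℝ), DifferentiableAt ℝ g t)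
    (h2 : HasDerivAt (deriv g) a 0)
    (hmax : IsLocalMax g 0) : a ≤ 0 := by
  by_contra hcon
  push_neg at hcon
  have hd0 : deriv g 0 = 0 := hmax.deriv_eq_zero
  have hslope : Tendsto (slope (deriv g) 0) (nhdsWithin 0 {(0:ℝ)}ᶜ) (nhds a) :=
    hasDerivAt_iff_tendsto_slope.1 h2
  have hpos : ∀ᶠ t in nhdsWithin 0 {(0:ℝ)}ᶜ, 0 < slope (deriv g) 0 t :=
    hslope.eventually (eventually_gt_nhds hcon)
  obtain ⟨δ₁, hδ₁, H₁⟩ := Metric.eventually_nhds_iff.mp (eventually_nhdsWithin_iff.mp hpos)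
  obtain ⟨δ₂, hδ₂, H₂⟩ := Metric.eventually_nhds_iff.mp (hg.and hmax)
  set δ := min δ₁ δ₂ with hδdef
  have hδ : 0 < δ := lt_min hδ₁ hδ₂
  have hder : ∀ t ∈ Set.Ioo (0:ℝ) δ, 0 < deriv g t := by
    intro t ht
    have hne : t ≠ 0 := ne_of_gt ht.1
    have hd : dist t 0 < δ₁ := by
      rw [Real.dist_eq, sub_zero, abs_of_pos ht.1]
      exact lt_of_lt_of_le ht.2 (min_le_left _ _)
    have := H₁ hd hne
    rw [slope_def_field, hd0, sub_zero, sub_zero, div_pos_iff] at this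
    rcases this with ⟨h1, _⟩ | ⟨_, h2'⟩
    · exact h1
    · exact absurd ht.1 (not_lt.2 h2'.le)
  have hcont : ∀ t ∈ Set.Icc (0:ℝ) (δ/2), DifferentiableAt ℝ g t := by
    intro t ht
    refine (H₂ ?_).1
    rw [Real.dist_eq, sub_zero, abs_of_nonneg ht.1]
    calc t ≤ δ/2 := ht.2
    _ < δ := by linarith
    _ ≤ δ₂ := min_le_right _ _
  have hsm : StrictMonoOn g (Set.Icc (0:ℝ) (δ/2)) := by
    apply strictMonoOn_of_deriv_pos (convex_Icc _ _)
    · exact fun t ht => (hcont t ht).continuousAt.continuousWithinAt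
    · intro t ht
      rw [interior_Icc] at ht
      exact hder t ⟨ht.1, lt_of_lt_of_le ht.2 (by linarith)⟩
  have hlt : g 0 < g (δ/2) := hsm ⟨le_refl _, by linarith⟩ ⟨by linarith, le_refl _⟩ (by linarith)
  have hle : g (δ/2) ≤ g 0 := by
    refine (H₂ ?_).2
    rw [Real.dist_eq, sub_zero, abs_of_pos (by linarith)]
    calc δ/2 < δ := by linarith
    _ ≤ δ₂ := min_le_right _ _
  linarith

lemma GL.pd_contDiffOn {F : Type} [NormedAddCommGroup F] [NormedSpace ℝ F] {f : E2 → F}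
    {s : Set E2} (hs : IsOpen s) (hf : ContDiffOn ℝ (⊤ : ℕ∞) f s) (k : Fin 2) :
    ContDiffOn ℝ (⊤ : ℕ∞) (pd k f) s := by
  have h1 : ContDiffOn ℝ (⊤ : ℕ∞) (fun x => fderiv ℝ f x) s := hf.fderiv_of_isOpen hs (by simp)
  exact h1.clm_apply contDiffOn_const

lemma GL.diffAt_of_contDiffOn {F : Type} [NormedAddCommGroup F] [NormedSpace ℝ F] {f : E2 → F}
    {s : Set E2} (hs : IsOpen s) (hf : ContDiffOn ℝ (⊤ : ℕ∞) f s) {y : E2} (hy : y ∈ s) :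
    DifferentiableAt ℝ f y :=
  ((hf y hy).contDiffAt (hs.mem_nhds hy)).differentiableAt (by simp)

/-- At an interior local maximum of a `C^∞` function, the Laplacian is nonpositive. -/
lemma GL.lap_nonpos_of_localMax {f : E2 → ℝ} {s : Set E2} (hs : IsOpen s)
    (hf : ContDiffOn ℝ (⊤ : ℕ∞) f s) {x₀ : E2} (hx : x₀ ∈ s) (hmax : IsLocalMax f x₀) :
    lap f x₀ ≤ 0 := by
  have key : ∀ k : Fin 2, pd k (pd k f) x₀ ≤ 0 := by
    intro k
    set e : E2 := EuclideanSpace.single k 1 with he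
    set L : ℝ → E2 := fun t => x₀ + t • e with hLdef
    have hL0 : L 0 = x₀ := by simp [hLdef]
    have hL : ∀ t : ℝ, HasDerivAt L e t := by
      intro t
      have : HasDerivAt (fun t : ℝ => t • e) ((1:ℝ) • e) t :=
        (hasDerivAt_id t).smul_const e
      rw [one_smul] at this
      exact this.const_add x₀
    have hLc : Continuous L := by
      apply continuous_const.add (continuous_id.smul continuous_const)
    have hT : IsOpen (L ⁻¹' s) := hs.preimage hLc
    have hT0 : (0:ℝ) ∈ L ⁻¹' s := by simp [Set.mem_preimage, hL0]; exact hx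
    have hTn : L ⁻¹' s ∈ nhds (0:ℝ) := hT.mem_nhds hT0
    set g : ℝ → ℝ := fun t => f (L t) with hgdef
    have hgd : ∀ t ∈ L ⁻¹' s, HasDerivAt g (pd k f (L t)) t := by
      intro t ht
      exact ((GL.diffAt_of_contDiffOn hs hf ht).hasFDerivAt).comp_hasDerivAt t (hL t)
    have hev : deriv g =ᶠ[nhds (0:ℝ)] fun t => pd k f (L t) := by
      filter_upwards [hTn] with t ht
      exact (hgd t ht).deriv
    have hP : DifferentiableAt ℝ (pd k f) x₀ :=
      GL.diffAt_of_contDiffOn hs (GL.pd_contDiffOn hs hf k) hx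
    have H2' : HasDerivAt (fun t => pd k f (L t)) (pd k (pd k f) x₀) 0 := by
      have := (hP.hasFDerivAt).comp_hasDerivAt_of_eq 0 (hL 0) hL0.symm
      exact this
    have H2 : HasDerivAt (deriv g) (pd k (pd k f) x₀) 0 :=
      H2'.congr_of_eventuallyEq hev
    have hmaxg : IsLocalMax g 0 := by
      have hm2 : IsLocalMax f (L 0) := by rw [hL0]; exact hmax
      exact hm2.comp_continuous hLc.continuousAt
    refine GL.second_deriv_test ?_ H2 hmaxg
    filter_upwards [hTn] with t ht
    exact (hgd t ht).differentiableAt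
  have h0 := key 0
  have h1 := key 1
  simp only [lap]
  linarith

variable {F : Type} [NormedAddCommGroup F] [InnerProductSpace ℝ F]

lemma GL.pd_contDiff {G : Type} [NormedAddCommGroup G] [NormedSpace ℝ G] {f : E2 → G}
    (hf : ContDiff ℝ (⊤ : ℕ∞) f) (k : Fin 2) : ContDiff ℝ (⊤ : ℕ∞) (pd k f) :=
  (hf.fderiv_right (by simp)).clm_apply contDiff_const

lemma GL.pd_normSq {u : E2 → F} (hu : ContDiff ℝ (⊤ : ℕ∞) u) (k : Fin 2) (x : E2) :
    pd k (fun y => ‖u y‖ ^ 2) x = 2 * ⟪u x, pd k u x⟫ := by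
  have h1 : (fun y : E2 => ‖u y‖ ^ 2) = fun y => ⟪u y, u y⟫ := by
    funext y; rw [real_inner_self_eq_norm_sq]
  have hd : DifferentiableAt ℝ u x := (hu.differentiable (by simp)).differentiableAt
  rw [pd, h1, fderiv_inner_apply (𝕜 := ℝ) hd hd]
  have h3 : (fderiv ℝ u x) (EuclideanSpace.single k 1) = pd k u x := rfl
  rw [h3, real_inner_comm (pd k u x) (u x)]
  ring

lemma GL.pd_pd_normSq {u : E2 → F} (hu : ContDiff ℝ (⊤ : ℕ∞) u) (k : Fin 2) (x : E2) :
    pd k (pd k (fun y => ‖u y‖ ^ 2)) x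
      = 2 * ⟪u x, pd k (pd k u) x⟫ + 2 * ‖pd k u x‖ ^ 2 := by
  have hU : ContDiff ℝ (⊤ : ℕ∞) (pd k u) := GL.pd_contDiff hu k
  have hd : DifferentiableAt ℝ u x := (hu.differentiable (by simp)).differentiableAt
  have hUd : DifferentiableAt ℝ (pd k u) x := (hU.differentiable (by simp)).differentiableAt
  have hinner : DifferentiableAt ℝ (fun y => ⟪u y, pd k u y⟫) x :=
    ((hu.differentiable (by simp)).differentiableAt).inner ℝ hUd
  have hev : pd k (fun y => ‖u y‖ ^ 2) = fun y => 2 * ⟪u y, pd k u y⟫ :=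
    funext fun y => GL.pd_normSq hu k y
  rw [pd, hev]
  have h2 : fderiv ℝ (fun y => 2 * ⟪u y, pd k u y⟫) x
      = (2 : ℝ) • fderiv ℝ (fun y => ⟪u y, pd k u y⟫) x := fderiv_const_mul hinner 2
  rw [h2, ContinuousLinearMap.smul_apply, smul_eq_mul,
    fderiv_inner_apply (𝕜 := ℝ) hd hUd]
  have h3 : (fderiv ℝ u x) (EuclideanSpace.single k 1) = pd k u x := rfl
  have h4 : (fderiv ℝ (pd k u) x) (EuclideanSpace.single k 1) = pd k (pd k u) x := rfl
  rw [h3, h4, real_inner_self_eq_norm_sq]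
  ring

lemma GL.lap_normSq_ge {u : E2 → F} (hu : ContDiff ℝ (⊤ : ℕ∞) u) (x : E2) :
    2 * ⟪u x, lap u x⟫ ≤ lap (fun y => ‖u y‖ ^ 2) x := by
  have h0 := GL.pd_pd_normSq hu 0 x
  have h1 := GL.pd_pd_normSq hu 1 x
  simp only [lap, inner_add_right]
  rw [h0, h1]
  nlinarith [sq_nonneg ‖pd 0 u x‖, sq_nonneg ‖pd 1 u x‖]

lemma GL.contDiff_q (y : E2) : ContDiff ℝ (⊤ : ℕ∞) (fun z : E2 => ‖z - y‖ ^ 2) :=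
  (contDiff_norm_sq ℝ).comp (contDiff_id.sub contDiff_const)

lemma GL.pd_q (y : E2) (k : Fin 2) (x : E2) :
    pd k (fun z : E2 => ‖z - y‖ ^ 2) x = 2 * (x k - y k) := by
  rw [GL.pd_normSq (u := fun z : E2 => z - y) (contDiff_id.sub contDiff_const) k x]
  have h1 : pd k (fun z : E2 => z - y) x = EuclideanSpace.single k 1 := by
    rw [pd, fderiv_sub_const, fderiv_id']
    rfl
  rw [h1, real_inner_comm, EuclideanSpace.inner_single_left]
  simp [PiLp.sub_apply]

lemma GL.sum_coord_sq (y x : E2) : (x 0 - y 0) ^ 2 + (x 1 - y 1) ^ 2 = ‖x - y‖ ^ 2 := by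
  rw [EuclideanSpace.norm_eq, Real.sq_sqrt (by positivity)]
  simp [Fin.sum_univ_two, Real.norm_eq_abs, sq_abs, PiLp.sub_apply]

lemma GL.isOpen_good (y : E2) (R : ℝ) : IsOpen {z : E2 | R ^ 2 - ‖z - y‖ ^ 2 ≠ 0} := by
  have : Continuous (fun z : E2 => R ^ 2 - ‖z - y‖ ^ 2) :=
    continuous_const.sub ((GL.contDiff_q y).continuous)
  exact isOpen_compl_singleton.preimage this

lemma GL.contDiffOn_psi (y : E2) (R A : ℝ) :
    ContDiffOn ℝ (⊤ : ℕ∞) (fun z : E2 => A * ((R ^ 2 - ‖z - y‖ ^ 2)⁻¹) ^ 2)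
      {z : E2 | R ^ 2 - ‖z - y‖ ^ 2 ≠ 0} :=
  contDiffOn_const.mul
    (((contDiffOn_const.sub (GL.contDiff_q y).contDiffOn).inv (fun _ hz => hz)).pow 2)

lemma GL.pd_psi (y : E2) (R A : ℝ) (k : Fin 2) {x : E2} (hx : R ^ 2 - ‖x - y‖ ^ 2 ≠ 0) :
    pd k (fun z : E2 => A * ((R ^ 2 - ‖z - y‖ ^ 2)⁻¹) ^ 2) x
      = (2 * A * ((R ^ 2 - ‖x - y‖ ^ 2)⁻¹) ^ 3) * (2 * (x k - y k)) := by
  set s0 := ‖x - y‖ ^ 2 with hs0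
  have hg : HasDerivAt (fun t : ℝ => A * ((R ^ 2 - t)⁻¹) ^ 2)
      (2 * A * ((R ^ 2 - s0)⁻¹) ^ 3) s0 := by
    have h1 : HasDerivAt (fun t : ℝ => R ^ 2 - t) (-1) s0 := (hasDerivAt_id s0).const_sub (R ^ 2)
    have h2 := h1.inv hx
    have h3 := h2.pow 2
    have h4 := h3.const_mul A
    refine h4.congr_deriv ?_
    simp only [Pi.inv_apply]
    field_simp
    linear_combination (2 * A) * mul_inv_cancel₀ hx
  have hq' : HasFDerivAt (fun z : E2 => ‖z - y‖ ^ 2)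
      (fderiv ℝ (fun z : E2 => ‖z - y‖ ^ 2) x) x :=
    (((GL.contDiff_q y).differentiable (by simp)) x).hasFDerivAt
  have H' : HasFDerivAt (fun z : E2 => A * ((R ^ 2 - ‖z - y‖ ^ 2)⁻¹) ^ 2)
      ((2 * A * ((R ^ 2 - s0)⁻¹) ^ 3) • fderiv ℝ (fun z : E2 => ‖z - y‖ ^ 2) x) x :=
    hg.comp_hasFDerivAt (f := fun z : E2 => ‖z - y‖ ^ 2) x hq'
  have : pd k (fun z : E2 => A * ((R ^ 2 - ‖z - y‖ ^ 2)⁻¹) ^ 2) x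
      = ((2 * A * ((R ^ 2 - s0)⁻¹) ^ 3) • fderiv ℝ (fun z : E2 => ‖z - y‖ ^ 2) x)
          (EuclideanSpace.single k 1) := by
    rw [pd, H'.fderiv]
  rw [this, ContinuousLinearMap.smul_apply, smul_eq_mul, ← pd, GL.pd_q]

lemma GL.pd_pd_psi (y : E2) (R A : ℝ) (k : Fin 2) {x : E2} (hx : R ^ 2 - ‖x - y‖ ^ 2 ≠ 0) :
    pd k (pd k (fun z : E2 => A * ((R ^ 2 - ‖z - y‖ ^ 2)⁻¹) ^ 2)) x
      = 4 * A * ((R ^ 2 - ‖x - y‖ ^ 2)⁻¹) ^ 3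
        + 24 * A * ((R ^ 2 - ‖x - y‖ ^ 2)⁻¹) ^ 4 * (x k - y k) ^ 2 := by
  have hev : pd k (fun z : E2 => A * ((R ^ 2 - ‖z - y‖ ^ 2)⁻¹) ^ 2)
      =ᶠ[nhds x] fun z => (2 * A * ((R ^ 2 - ‖z - y‖ ^ 2)⁻¹) ^ 3) * (2 * (z k - y k)) := by
    filter_upwards [(GL.isOpen_good y R).mem_nhds hx] with z hz
    exact GL.pd_psi y R A k hz
  have hC : HasFDerivAt (fun z : E2 => 2 * A * ((R ^ 2 - ‖z - y‖ ^ 2)⁻¹) ^ 3)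
      ((6 * A * ((R ^ 2 - ‖x - y‖ ^ 2)⁻¹) ^ 4) • fderiv ℝ (fun z : E2 => ‖z - y‖ ^ 2) x) x := by
    have h1 : HasDerivAt (fun t : ℝ => R ^ 2 - t) (-1) (‖x - y‖ ^ 2) :=
      (hasDerivAt_id _).const_sub (R ^ 2)
    have h2 := h1.inv hx
    have h3 := h2.pow 3
    have h4 := h3.const_mul (2 * A)
    have hq' : HasFDerivAt (fun z : E2 => ‖z - y‖ ^ 2)
        (fderiv ℝ (fun z : E2 => ‖z - y‖ ^ 2) x) x :=
      (((GL.contDiff_q y).differentiable (by simp)) x).hasFDerivAt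
    have H' : HasFDerivAt (fun z : E2 => 2 * A * ((R ^ 2 - ‖z - y‖ ^ 2)⁻¹) ^ 3)
        ((2 * A * (3 * ((R ^ 2 - ‖x - y‖ ^ 2)⁻¹) ^ 2 * (-(-1) / (R ^ 2 - ‖x - y‖ ^ 2) ^ 2))) •
          fderiv ℝ (fun z : E2 => ‖z - y‖ ^ 2) x) x :=
      h4.comp_hasFDerivAt (f := fun z : E2 => ‖z - y‖ ^ 2) x hq'
    convert H' using 2
    field_simp
    ring
  have hl : HasFDerivAt (fun z : E2 => 2 * (z k - y k))
      ((2 : ℝ) • ((EuclideanSpace.proj k : E2 →L[ℝ] ℝ))) x := by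
    have h1 : HasFDerivAt (fun z : E2 => z k - y k) (EuclideanSpace.proj k : E2 →L[ℝ] ℝ) x :=
      ((EuclideanSpace.proj k : E2 →L[ℝ] ℝ).hasFDerivAt).sub_const (y k)
    exact h1.const_mul 2
  have hmul := hC.fun_mul hl
  have hproj : (EuclideanSpace.proj k : E2 →L[ℝ] ℝ) (EuclideanSpace.single k 1) = 1 := by
    rw [show (EuclideanSpace.proj k : E2 →L[ℝ] ℝ) (EuclideanSpace.single k 1)
      = (EuclideanSpace.single k (1:ℝ)) k from rfl, EuclideanSpace.single_apply]
    simp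
  have hqe : (fderiv ℝ (fun z : E2 => ‖z - y‖ ^ 2) x) (EuclideanSpace.single k 1)
      = 2 * (x k - y k) := GL.pd_q y k x
  rw [pd, hev.fderiv_eq, hmul.fderiv]
  simp only [ContinuousLinearMap.add_apply, ContinuousLinearMap.smul_apply, smul_eq_mul,
    hproj, hqe]
  ring

lemma GL.lap_psi (y : E2) (R A : ℝ) {x : E2} (hx : R ^ 2 - ‖x - y‖ ^ 2 ≠ 0) :
    lap (fun z : E2 => A * ((R ^ 2 - ‖z - y‖ ^ 2)⁻¹) ^ 2) x
      = 8 * A * ((R ^ 2 - ‖x - y‖ ^ 2)⁻¹) ^ 3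
        + 24 * A * ((R ^ 2 - ‖x - y‖ ^ 2)⁻¹) ^ 4 * ‖x - y‖ ^ 2 := by
  rw [lap, GL.pd_pd_psi y R A 0 hx, GL.pd_pd_psi y R A 1 hx, ← GL.sum_coord_sq y x]
  ring

lemma GL.lap_sub {f g : E2 → ℝ} {s : Set E2} (hs : IsOpen s) (hf : ContDiffOn ℝ (⊤ : ℕ∞) f s)
    (hg : ContDiffOn ℝ (⊤ : ℕ∞) g s) {x : E2} (hx : x ∈ s) :
    lap (fun z => f z - g z) x = lap f x - lap g x := by
  have key : ∀ k : Fin 2, pd k (pd k (fun z => f z - g z)) x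
      = pd k (pd k f) x - pd k (pd k g) x := by
    intro k
    have hev : pd k (fun z => f z - g z) =ᶠ[nhds x] fun z => pd k f z - pd k g z := by
      filter_upwards [hs.mem_nhds hx] with z hz
      rw [pd, fderiv_fun_sub (GL.diffAt_of_contDiffOn hs hf hz) (GL.diffAt_of_contDiffOn hs hg hz)]
      rfl
    rw [pd, hev.fderiv_eq,
      fderiv_fun_sub (GL.diffAt_of_contDiffOn hs (GL.pd_contDiffOn hs hf k) hx)
        (GL.diffAt_of_contDiffOn hs (GL.pd_contDiffOn hs hg k) hx)]
    rfl
  rw [lap, key 0, key 1, lap, lap]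
  ring

end GLAux

set_option maxHeartbeats 2000000 in
open Filter RealInnerProductSpace in
/-- an entire smooth solution of the Ginzburg–Landau equation
`−Δu = (1/ε²)(1−|u|²)u` on `ℝ²` with `∫ (1−|u|²)² < ∞` satisfies `|u| ≤ 1` everywhere. -/
theorem ginzburg_landau_entire_modulus_le_one
    (n : ℕ) (hn : 1 ≤ n) (ε : ℝ) (hε : 0 < ε)
    (u : E2 → EuclideanSpace ℝ (Fin (n + 1)))
    (hu : ContDiff ℝ (⊤ : ℕ∞) u)
    (heq : ∀ x : E2, -lap u x = ((1 / ε ^ 2) * (1 - ‖u x‖ ^ 2)) • u x)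
    (hint : Integrable (fun x : E2 => (1 - ‖u x‖ ^ 2) ^ 2)) :
    ∀ x : E2, ‖u x‖ ≤ 1 := by
  intro y
  set v : E2 → ℝ := fun z => ‖u z‖ ^ 2 with hv_def
  have hv : ContDiff ℝ (⊤ : ℕ∞) v := (contDiff_norm_sq ℝ).comp hu
  have hεsq : (0:ℝ) < ε ^ 2 := by positivity
  have hlapv : ∀ x : E2, 2 / ε ^ 2 * ((v x - 1) * v x) ≤ lap v x := by
    intro x
    have h1 := GL.lap_normSq_ge hu x
    rw [← hv_def] at h1
    have h2 : lap u x = -(((1 / ε ^ 2) * (1 - ‖u x‖ ^ 2)) • u x) :=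
      neg_eq_iff_eq_neg.mp (heq x)
    have h3 : ⟪u x, lap u x⟫ = -((1 / ε ^ 2) * (1 - ‖u x‖ ^ 2)) * ‖u x‖ ^ 2 := by
      rw [h2, ← neg_smul, real_inner_smul_right, real_inner_self_eq_norm_sq]
    have h4 : 2 / ε ^ 2 * ((v x - 1) * v x) = 2 * ⟪u x, lap u x⟫ := by
      rw [h3, hv_def]
      ring
    linarith
  -- main claim
  have main : ∀ R : ℝ, 0 < R → v y ≤ 1 + 16 * ε ^ 2 / R ^ 2 := by
    intro R hR
    by_contra hcon
    push_neg at hcon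
    set A : ℝ := 16 * ε ^ 2 * R ^ 2 with hA_def
    have hA : 0 < A := by positivity
    set ψ : E2 → ℝ := fun z => A * ((R ^ 2 - ‖z - y‖ ^ 2)⁻¹) ^ 2 with hψ_def
    set f : E2 → ℝ := fun z => v z - ψ z with hf_def
    have hball : ∀ x ∈ ball y R, ‖x - y‖ ^ 2 < R ^ 2 := by
      intro x hx
      have h := mem_ball_iff_norm.mp hx
      nlinarith [norm_nonneg (x - y)]
    have hsub : ball y R ⊆ {z : E2 | R ^ 2 - ‖z - y‖ ^ 2 ≠ 0} := by
      intro x hx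
      exact ne_of_gt (by linarith [hball x hx])
    have hψy : ψ y = 16 * ε ^ 2 / R ^ 2 := by
      have h0 : ‖y - y‖ ^ 2 = (0:ℝ) := by simp
      simp only [hψ_def, hA_def, h0, sub_zero]
      field_simp
    have hfy : 1 < f y := by
      have e : f y = v y - ψ y := by simp only [hf_def]
      rw [e, hψy]
      linarith
    have hfs : ContDiffOn ℝ (⊤ : ℕ∞) f (ball y R) := by
      rw [hf_def]
      exact (hv.contDiffOn).sub ((GL.contDiffOn_psi y R A).mono hsub)
    -- compact max of v on closed ball
    obtain ⟨zS, hzS, hSmax⟩ := (isCompact_closedBall y R).exists_isMaxOn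
      ⟨y, mem_closedBall_self hR.le⟩ (hv.continuous.continuousOn)
    set S := v zS with hS_def
    set C : ℝ := max (S - f y + 1) 1 with hC_def
    have hC : 0 < C := lt_of_lt_of_le one_pos (le_max_right _ _)
    set d : ℝ := min (R ^ 2 / 2) (Real.sqrt (A / C)) with hd_def
    have hd : 0 < d := lt_min (by positivity) (Real.sqrt_pos.mpr (by positivity))
    have hdR : d ≤ R ^ 2 / 2 := min_le_left _ _
    set r : ℝ := Real.sqrt (R ^ 2 - d) with hr_def
    have hr2 : r ^ 2 = R ^ 2 - d := Real.sq_sqrt (by nlinarith)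
    have hrpos : 0 ≤ r := Real.sqrt_nonneg _
    have hrR : r < R := by nlinarith
    have hfar : ∀ x ∈ ball y R, r < dist x y → f x ≤ f y - 1 := by
      intro x hx hdist
      have hdn : dist x y = ‖x - y‖ := dist_eq_norm x y
      have h1 : r ^ 2 < ‖x - y‖ ^ 2 := by
        rw [← hdn]; nlinarith [dist_nonneg (x := x) (y := y)]
      have h3 : 0 < R ^ 2 - ‖x - y‖ ^ 2 := by linarith [hball x hx]
      have h2 : R ^ 2 - ‖x - y‖ ^ 2 < d := by rw [hr2] at h1; linarith
      have h4 : (R ^ 2 - ‖x - y‖ ^ 2) ^ 2 ≤ A / C := by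
        have hdle : d ≤ Real.sqrt (A / C) := min_le_right _ _
        have h5 : Real.sqrt (A / C) ^ 2 = A / C := Real.sq_sqrt (by positivity)
        nlinarith
      have hψx : C ≤ ψ x := by
        have hpe : ψ x = A / (R ^ 2 - ‖x - y‖ ^ 2) ^ 2 := by
          rw [hψ_def]
          field_simp
        rw [hpe, le_div_iff₀ (by positivity)]
        calc C * (R ^ 2 - ‖x - y‖ ^ 2) ^ 2 ≤ C * (A / C) :=
              mul_le_mul_of_nonneg_left h4 hC.le
          _ = A := by field_simp
      have hvx : v x ≤ S := hSmax (ball_subset_closedBall hx)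
      have hCge : S - f y + 1 ≤ C := le_max_left _ _
      have e : f x = v x - ψ x := by simp only [hf_def]
      rw [e]
      linarith
    obtain ⟨x₀, hx₀K, hmax₀⟩ := (isCompact_closedBall y r).exists_isMaxOn
      ⟨y, mem_closedBall_self hrpos⟩
      (hfs.continuousOn.mono (closedBall_subset_ball hrR))
    have hx₀ball : x₀ ∈ ball y R := closedBall_subset_ball hrR hx₀K
    have hfy_le : f y ≤ f x₀ := hmax₀ (mem_closedBall_self hrpos)
    have hglob : ∀ x ∈ ball y R, f x ≤ f x₀ := by
      intro x hx
      by_cases hcase : dist x y ≤ r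
      · exact hmax₀ hcase
      · push_neg at hcase
        linarith [hfar x hx hcase]
    have hlocmax : IsLocalMax f x₀ := by
      filter_upwards [isOpen_ball.mem_nhds hx₀ball] with z hz using hglob z hz
    have hlap_le : lap f x₀ ≤ 0 :=
      GL.lap_nonpos_of_localMax isOpen_ball hfs hx₀ball hlocmax
    have hlap_split : lap f x₀ = lap v x₀ - lap ψ x₀ := by
      rw [hf_def]
      exact GL.lap_sub isOpen_ball hv.contDiffOn ((GL.contDiffOn_psi y R A).mono hsub) hx₀ball
    set T : ℝ := (R ^ 2 - ‖x₀ - y‖ ^ 2)⁻¹ with hT_def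
    have hden : 0 < R ^ 2 - ‖x₀ - y‖ ^ 2 := by linarith [hball x₀ hx₀ball]
    have hT : 0 < T := inv_pos.mpr hden
    have hTden : T * (R ^ 2 - ‖x₀ - y‖ ^ 2) = 1 := inv_mul_cancel₀ (ne_of_gt hden)
    have hψx₀ : ψ x₀ = A * T ^ 2 := by simp only [hψ_def, hT_def]
    have hlapψ : lap ψ x₀ = 8 * A * T ^ 3 + 24 * A * T ^ 4 * ‖x₀ - y‖ ^ 2 :=
      GL.lap_psi y R A (ne_of_gt hden)
    have hq0 : (0:ℝ) ≤ ‖x₀ - y‖ ^ 2 := sq_nonneg _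
    have hlapψ_le : lap ψ x₀ ≤ 2 / ε ^ 2 * (ψ x₀) ^ 2 := by
      have e1 : T ^ 3 = T ^ 4 * (R ^ 2 - ‖x₀ - y‖ ^ 2) := by
        calc T ^ 3 = T ^ 3 * (T * (R ^ 2 - ‖x₀ - y‖ ^ 2)) := by rw [hTden, mul_one]
          _ = T ^ 4 * (R ^ 2 - ‖x₀ - y‖ ^ 2) := by ring
      have e2 : lap ψ x₀ ≤ 32 * A * R ^ 2 * T ^ 4 := by
        rw [hlapψ, e1]
        nlinarith [mul_nonneg (mul_nonneg hA.le (pow_nonneg hT.le 4)) hq0,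
          mul_nonneg (mul_nonneg hA.le (pow_nonneg hT.le 4)) hden.le]
      have e3 : 2 / ε ^ 2 * (ψ x₀) ^ 2 = 32 * A * R ^ 2 * T ^ 4 := by
        rw [hψx₀, hA_def]
        field_simp
        ring
      linarith
    have h1 : 1 < f x₀ := lt_of_lt_of_le hfy hfy_le
    have hψpos₀ : 0 < ψ x₀ := by rw [hψx₀]; positivity
    have hfx₀ : f x₀ = v x₀ - ψ x₀ := by simp only [hf_def]
    have hv₀ : ψ x₀ < v x₀ - 1 := by rw [hfx₀] at h1; linarith
    have hlapv₀ := hlapv x₀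
    have hA1 : 0 < 2 / ε ^ 2 := by positivity
    have h6 : 0 < (v x₀ - 1 - ψ x₀) * (v x₀ - 1 + ψ x₀) :=
      mul_pos (by linarith) (by linarith)
    have hkey : ψ x₀ ^ 2 < (v x₀ - 1) * v x₀ := by nlinarith
    have h7 : 2 / ε ^ 2 * ψ x₀ ^ 2 < 2 / ε ^ 2 * ((v x₀ - 1) * v x₀) :=
      mul_lt_mul_of_pos_left hkey hA1
    have hfinal : (0:ℝ) < lap f x₀ := by
      rw [hlap_split]
      linarith
    linarith
  -- conclude
  have hv1 : v y ≤ 1 := by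
    by_contra h
    push_neg at h
    have hδ : 0 < v y - 1 := by linarith
    set R := Real.sqrt (32 * ε ^ 2 / (v y - 1)) with hR_def
    have hR2 : R ^ 2 = 32 * ε ^ 2 / (v y - 1) := Real.sq_sqrt (by positivity)
    have hRpos : 0 < R := Real.sqrt_pos.mpr (by positivity)
    have hm := main R hRpos
    rw [hR2] at hm
    have heq2 : 16 * ε ^ 2 / (32 * ε ^ 2 / (v y - 1)) = (v y - 1) / 2 := by
      field_simp
      ring
    rw [heq2] at hm
    linarith
  have : ‖u y‖ ^ 2 ≤ 1 := hv1
  nlinarith [norm_nonneg (u y)]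
end
end

section
/- For every integer n ≥ 1 there exists a constant C > 0 such that the following holds: for every ε > 0, every open set Ω ⊆ ℝ², and every smooth u : ℝ² → ℝ^{n+1} satisfying −Δu = (1/ε²)(1−|u|²)u on Ω with |u(x)| ≤ 1 for all x ∈ Ω, the energy density e_ε(u) = ½|Du|² + (1−|u|²)²/(4ε²) is smooth on Ω and satisfies −Δ(e_ε(u))(x) ≤ C·( e_ε(u)(x)² + e_ε(u)(x) ) for every x ∈ Ω. -/
open MeasureTheory Metric Real

noncomputable section

/-- Squared Frobenius norm of the total derivative. -/
def gradSqNorm {F : Type} [NormedAddCommGroup F] [NormedSpace ℝ F]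
    (f : E2 → F) (x : E2) : ℝ :=
  ∑ k : Fin 2, ‖pd k f x‖ ^ 2

/-- Ginzburg–Landau energy density `e_ε(u) = ½|Du|² + (1−|u|²)²/(4ε²)`. -/
def eDens {F : Type} [NormedAddCommGroup F] [NormedSpace ℝ F]
    (ε : ℝ) (f : E2 → F) (x : E2) : ℝ :=
  gradSqNorm f x / 2 + (1 - ‖f x‖ ^ 2) ^ 2 / (4 * ε ^ 2)

open RealInnerProductSpace

section Helpers

variable {F : Type} [NormedAddCommGroup F] [InnerProductSpace ℝ F]

lemma pd_smooth {f : E2 → F} (hf : ContDiff ℝ (⊤ : ℕ∞) f) (k : Fin 2) :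
    ContDiff ℝ (⊤ : ℕ∞) (pd k f) :=
  (hf.fderiv_right (by simp)).clm_apply contDiff_const

lemma pd_congr {f g : E2 → F} {Ω : Set E2} (hΩ : IsOpen Ω) (h : ∀ y ∈ Ω, f y = g y)
    {x : E2} (hx : x ∈ Ω) (k : Fin 2) : pd k f x = pd k g x := by
  unfold pd
  rw [Filter.EventuallyEq.fderiv_eq (Filter.eventuallyEq_of_mem (hΩ.mem_nhds hx) h)]

lemma pd_snd {f : E2 → F} (hf : ContDiff ℝ (⊤ : ℕ∞) f) (j k : Fin 2) (x : E2) :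
    pd j (pd k f) x
      = fderiv ℝ (fderiv ℝ f) x (EuclideanSpace.single j 1) (EuclideanSpace.single k 1) := by
  have hdf : DifferentiableAt ℝ (fderiv ℝ f) x :=
    ((hf.fderiv_right (m := 1) (WithTop.coe_le_coe.mpr le_top)).differentiable one_ne_zero) x
  unfold pd
  rw [fderiv_clm_apply hdf (differentiableAt_const _)]
  simp

lemma pd_comm {f : E2 → F} (hf : ContDiff ℝ (⊤ : ℕ∞) f) (j k : Fin 2) (x : E2) :
    pd j (pd k f) x = pd k (pd j f) x := by
  rw [pd_snd hf, pd_snd hf]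
  exact (hf.contDiffAt.isSymmSndFDerivAt (by rw [minSmoothness_of_isRCLikeNormedField]; exact WithTop.coe_le_coe.mpr (le_top : (2:ℕ∞) ≤ ⊤))) _ _

lemma pd_apply_add {f g : E2 → F} {x : E2} (hf : DifferentiableAt ℝ f x)
    (hg : DifferentiableAt ℝ g x) (k : Fin 2) :
    pd k (fun y => f y + g y) x = pd k f x + pd k g x := by
  unfold pd; rw [fderiv_fun_add hf hg]; rfl

lemma pd_inner {f g : E2 → F} {x : E2} (hf : DifferentiableAt ℝ f x)
    (hg : DifferentiableAt ℝ g x) (k : Fin 2) :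
    pd k (fun y => ⟪f y, g y⟫) x = ⟪pd k f x, g x⟫ + ⟪f x, pd k g x⟫ := by
  unfold pd
  rw [fderiv_inner_apply ℝ hf hg]
  ring

lemma pd_smul_apply {c : E2 → ℝ} {f : E2 → F} {x : E2} (hc : DifferentiableAt ℝ c x)
    (hf : DifferentiableAt ℝ f x) (k : Fin 2) :
    pd k (fun y => c y • f y) x = c x • pd k f x + (pd k c x) • f x := by
  unfold pd
  rw [fderiv_fun_smul hc hf]
  simp

lemma pd_combo {f g : E2 → ℝ} (hf : ContDiff ℝ (⊤ : ℕ∞) f) (hg : ContDiff ℝ (⊤ : ℕ∞) g) (a b : ℝ) (k : Fin 2) :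
    pd k (fun y => a * f y + b * g y) = fun x => a * pd k f x + b * pd k g x := by
  funext x
  unfold pd
  rw [fderiv_fun_add (((hf.differentiable (by simp)) x).const_mul a)
    (((hg.differentiable (by simp)) x).const_mul b),
    fderiv_const_mul ((hf.differentiable (by simp)) x),
    fderiv_const_mul ((hg.differentiable (by simp)) x)]
  simp

lemma lap_combo {f g : E2 → ℝ} (hf : ContDiff ℝ (⊤ : ℕ∞) f) (hg : ContDiff ℝ (⊤ : ℕ∞) g) (a b : ℝ) (x : E2) :
    lap (fun y => a * f y + b * g y) x = a * lap f x + b * lap g x := by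
  unfold lap
  rw [pd_combo hf hg a b 0, pd_combo hf hg a b 1,
    pd_combo (pd_smooth hf 0) (pd_smooth hg 0) a b 0,
    pd_combo (pd_smooth hf 1) (pd_smooth hg 1) a b 1]
  ring

lemma lap_inner {f g : E2 → F} (hf : ContDiff ℝ (⊤ : ℕ∞) f) (hg : ContDiff ℝ (⊤ : ℕ∞) g) (x : E2) :
    lap (fun y => ⟪f y, g y⟫) x
      = ⟪lap f x, g x⟫ + ⟪f x, lap g x⟫
        + 2 * (⟪pd 0 f x, pd 0 g x⟫ + ⟪pd 1 f x, pd 1 g x⟫) := by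
  have hfd := hf.differentiable (by simp)
  have hgd := hg.differentiable (by simp)
  have key : ∀ k : Fin 2, pd k (fun y => ⟪f y, g y⟫)
      = fun y => ⟪pd k f y, g y⟫ + ⟪f y, pd k g y⟫ :=
    fun k => funext fun y => pd_inner (hfd y) (hgd y) k
  unfold lap
  rw [key 0, key 1,
    pd_apply_add ((((pd_smooth hf 0).differentiable (by simp)) x).inner ℝ (hgd x))
      ((hfd x).inner ℝ (((pd_smooth hg 0).differentiable (by simp)) x)) 0,
    pd_apply_add ((((pd_smooth hf 1).differentiable (by simp)) x).inner ℝ (hgd x))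
      ((hfd x).inner ℝ (((pd_smooth hg 1).differentiable (by simp)) x)) 1,
    pd_inner (((pd_smooth hf 0).differentiable (by simp)) x) (hgd x) 0,
    pd_inner (((pd_smooth hf 1).differentiable (by simp)) x) (hgd x) 1,
    pd_inner (hfd x) (((pd_smooth hg 0).differentiable (by simp)) x) 0,
    pd_inner (hfd x) (((pd_smooth hg 1).differentiable (by simp)) x) 1,
    inner_add_left, inner_add_right]
  ring

lemma lap_normSq {f : E2 → F} (hf : ContDiff ℝ (⊤ : ℕ∞) f) (x : E2) :
    lap (fun y => ‖f y‖ ^ 2) x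
      = 2 * ⟪lap f x, f x⟫ + 2 * (‖pd 0 f x‖ ^ 2 + ‖pd 1 f x‖ ^ 2) := by
  have h : (fun y => ‖f y‖ ^ 2) = fun y => ⟪f y, f y⟫ :=
    funext fun y => (real_inner_self_eq_norm_sq _).symm
  rw [h, lap_inner hf hf, real_inner_comm (f x) (lap f x),
    real_inner_self_eq_norm_sq, real_inner_self_eq_norm_sq]
  ring

lemma lap_const_sub {f : E2 → ℝ} (c : ℝ) (x : E2) :
    lap (fun y => c - f y) x = -(lap f x) := by
  have h1 : ∀ k : Fin 2, pd k (fun y => c - f y) = fun y => -(pd k f y) := by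
    intro k; funext y; unfold pd; rw [fderiv_const_sub]; rfl
  have h2 : ∀ (g : E2 → ℝ) (k : Fin 2), pd k (fun y => -(g y)) = fun y => -(pd k g y) := by
    intro g k; funext y; unfold pd; rw [fderiv_fun_neg]; rfl
  unfold lap
  rw [h1 0, h1 1, h2 _ 0, h2 _ 1]
  ring

lemma key_ineq (t G R S : ℝ) (ht : 0 < t) (hG : 0 ≤ G) (hR : 0 ≤ R) (hS : 0 ≤ S)
    (hRS : R + S = 1) :
    2*t*R*G - t^2*R^2*S ≤ 64 * ((G/2 + t*R^2/4)^2 + (G/2 + t*R^2/4)) := by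
  rcases le_or_gt (1/2) S with hs | hs
  · have hS1 : S ≤ 1 := by linarith
    have h1 : 2*(S*(R*t))*G ≤ S^2*(R*t)^2 + G^2 := by nlinarith [sq_nonneg (S*(R*t) - G)]
    have h2 : (2*t*R*G) * S ≤ (S*R^2*t^2 + 2*G^2) * S := by nlinarith
    have h3 : 2*t*R*G ≤ S*R^2*t^2 + 2*G^2 := le_of_mul_le_mul_right h2 (by linarith)
    nlinarith [sq_nonneg (t*R^2), mul_nonneg (mul_nonneg hG (sq_nonneg R)) ht.le,
      mul_nonneg hG ht.le, sq_nonneg G, mul_nonneg (sq_nonneg R) ht.le]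
  · have hR2 : 1/2 ≤ R := by linarith
    have hR1 : R ≤ 1 := by linarith
    nlinarith [mul_nonneg (mul_nonneg ht.le hG) (by nlinarith : (0:ℝ) ≤ 4*R^2 - 1),
      mul_nonneg (mul_nonneg ht.le hG) (by linarith : (0:ℝ) ≤ 1 - R),
      sq_nonneg G, sq_nonneg (t*R^2), mul_nonneg hG (mul_nonneg ht.le (sq_nonneg R)),
      mul_nonneg (mul_nonneg (sq_nonneg t) (sq_nonneg R)) hS,
      mul_nonneg ht.le (sq_nonneg R)]

end Helpers

set_option maxHeartbeats 1000000 in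
/-- the Bochner-type inequality for the Ginzburg–Landau energy density
(Lemma A.1 of the paper, flat case). -/
theorem ginzburg_landau_bochner_inequality
    (n : ℕ) (hn : 1 ≤ n) :
    ∃ C > (0 : ℝ),
      ∀ (ε : ℝ), 0 < ε → ∀ (Ω : Set E2), IsOpen Ω →
      ∀ (u : E2 → EuclideanSpace ℝ (Fin (n + 1))),
        ContDiff ℝ (⊤ : ℕ∞) u →
        (∀ x ∈ Ω, -lap u x = ((1 / ε ^ 2) * (1 - ‖u x‖ ^ 2)) • u x) →
        (∀ x ∈ Ω, ‖u x‖ ≤ 1) →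
        ContDiffOn ℝ (⊤ : ℕ∞) (fun x => eDens ε u x) Ω ∧
        ∀ x ∈ Ω,
          -lap (fun y => eDens ε u y) x
            ≤ C * ((eDens ε u x) ^ 2 + eDens ε u x) := by
  refine ⟨64, by norm_num, fun ε hε Ω hΩ u hu hpde hub => ?_⟩
  have hε2 : (0:ℝ) < ε ^ 2 := by positivity
  set t : ℝ := 1 / ε ^ 2 with ht_def
  have ht : 0 < t := by positivity
  have hud : Differentiable ℝ u := hu.differentiable (by simp)
  have hU : ∀ k : Fin 2, ContDiff ℝ (⊤ : ℕ∞) (pd k u) := pd_smooth hu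
  set q : E2 → ℝ := fun y => ‖pd 0 u y‖ ^ 2 + ‖pd 1 u y‖ ^ 2 with hq_def
  set r : E2 → ℝ := fun y => 1 - ‖u y‖ ^ 2 with hr_def
  have hq : ContDiff ℝ (⊤ : ℕ∞) q := ((hU 0).norm_sq (𝕜 := ℝ)).add ((hU 1).norm_sq (𝕜 := ℝ))
  have hr : ContDiff ℝ (⊤ : ℕ∞) r := contDiff_const.sub (hu.norm_sq (𝕜 := ℝ))
  have hr2 : ContDiff ℝ (⊤ : ℕ∞) (fun y => (r y) ^ 2) := hr.pow 2
  have hefun : (fun x => eDens ε u x) = fun x => (1/2) * q x + t/4 * (r x) ^ 2 := by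
    funext x
    simp only [eDens, gradSqNorm, Fin.sum_univ_two, hq_def, hr_def, ht_def]
    field_simp
  have heSmooth : ContDiff ℝ (⊤ : ℕ∞) (fun x => eDens ε u x) := by
    rw [hefun]
    exact (contDiff_const.mul hq).add (contDiff_const.mul hr2)
  refine ⟨heSmooth.contDiffOn, fun x hx => ?_⟩
  -- basic derivative facts for r
  have hpdr : ∀ (k : Fin 2) (y : E2), pd k r y = -(2 * ⟪pd k u y, u y⟫) := by
    intro k y
    have h1 : r = fun y => 1 - ⟪u y, u y⟫ := by
      funext z; simp only [hr_def]; rw [real_inner_self_eq_norm_sq]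
    have h2 : pd k r y = -(pd k (fun z => ⟪u z, u z⟫) y) := by
      rw [h1]; unfold pd; rw [fderiv_const_sub]; rfl
    rw [h2, pd_inner (hud y) (hud y), real_inner_comm]
    ring
  -- the PDE written as an equality of `lap u` on Ω
  set c : E2 → ℝ := fun y => -(t * r y) with hc_def
  have hlap_eq : ∀ y ∈ Ω, lap u y = c y • u y := by
    intro y hy
    have := hpde y hy
    have h2 : lap u y = -(((1 / ε ^ 2) * (1 - ‖u y‖ ^ 2)) • u y) := by
      rw [← this]; simp
    rw [h2]
    simp [hc_def, hr_def, ht_def, neg_smul]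
  have hcd : Differentiable ℝ c := by
    have : ContDiff ℝ (⊤ : ℕ∞) c := (contDiff_const.mul hr).neg
    exact this.differentiable (by simp)
  -- lap (pd k u) = pd k (lap u)
  have hlapU : ∀ (k : Fin 2) (y : E2), lap (pd k u) y = pd k (fun z => lap u z) y := by
    intro k y
    have h0 : pd 0 (pd k u) = pd k (pd 0 u) := funext fun z => pd_comm hu 0 k z
    have h1 : pd 1 (pd k u) = pd k (pd 1 u) := funext fun z => pd_comm hu 1 k z
    have e0 : pd 0 (pd 0 (pd k u)) y = pd k (pd 0 (pd 0 u)) y := by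
      rw [h0]; exact pd_comm (pd_smooth hu 0) 0 k y
    have e1 : pd 1 (pd 1 (pd k u)) y = pd k (pd 1 (pd 1 u)) y := by
      rw [h1]; exact pd_comm (pd_smooth hu 1) 1 k y
    have : lap (pd k u) y = pd k (pd 0 (pd 0 u)) y + pd k (pd 1 (pd 1 u)) y := by
      unfold lap at *; rw [e0, e1]
    rw [this, ← pd_apply_add (((pd_smooth (pd_smooth hu 0) 0).differentiable (by simp)) y)
      (((pd_smooth (pd_smooth hu 1) 1).differentiable (by simp)) y) k]
    rfl
  -- value of pd k (lap u) on Ω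
  have hpdlapU : ∀ (k : Fin 2), pd k (fun z => lap u z) x
      = c x • pd k u x + (pd k c x) • u x := by
    intro k
    have h1 : pd k (fun z => lap u z) x = pd k (fun z => c z • u z) x :=
      pd_congr hΩ hlap_eq hx k
    rw [h1, pd_smul_apply (hcd x) (hud x) k]
  have hpdc : ∀ (k : Fin 2) (y : E2), pd k c y = -(t * pd k r y) := by
    intro k y
    have h1 : c = fun z => (-t) * r z := by funext z; simp [hc_def]; try ring
    rw [h1]
    unfold pd
    rw [fderiv_const_mul ((hr.differentiable (by simp)) y)]
    simp [pd]
    try ring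
  -- abbreviations at the point x
  set G : ℝ := q x with hG_def
  set R : ℝ := r x with hR_def
  set S : ℝ := ‖u x‖ ^ 2 with hS_def
  set P : Fin 2 → ℝ := fun k => pd k r x with hP_def
  have hinner_uU : ∀ k : Fin 2, ⟪u x, pd k u x⟫ = -(P k) / 2 := by
    intro k
    have := hpdr k x
    rw [real_inner_comm]
    simp only [hP_def, this]
    ring
  -- compute lap q x
  have hlapq : lap q x = -(2*t*R*G) + t * ((P 0)^2 + (P 1)^2)
      + 2 * ((‖pd 0 (pd 0 u) x‖^2 + ‖pd 1 (pd 0 u) x‖^2)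
           + (‖pd 0 (pd 1 u) x‖^2 + ‖pd 1 (pd 1 u) x‖^2)) := by
    have hsum : lap q x = lap (fun y => ‖pd 0 u y‖ ^ 2) x + lap (fun y => ‖pd 1 u y‖ ^ 2) x := by
      have : q = fun y => 1 * (fun z => ‖pd 0 u z‖ ^ 2) y + 1 * (fun z => ‖pd 1 u z‖ ^ 2) y := by
        funext y; simp [hq_def]
      rw [this, lap_combo ((hU 0).norm_sq (𝕜 := ℝ)) ((hU 1).norm_sq (𝕜 := ℝ)) 1 1 x]
      ring
    have hterm : ∀ k : Fin 2, ⟪lap (pd k u) x, pd k u x⟫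
        = -(t*R) * ‖pd k u x‖^2 + t * (P k)^2 / 2 := by
      intro k
      rw [hlapU k x, hpdlapU k, inner_add_left, real_inner_smul_left, real_inner_smul_left,
        real_inner_self_eq_norm_sq, hinner_uU k, hpdc k x]
      simp only [hc_def, hR_def, hP_def]
      ring
    rw [hsum, lap_normSq (hU 0) x, lap_normSq (hU 1) x, hterm 0, hterm 1]
    have hGsum : G = ‖pd 0 u x‖^2 + ‖pd 1 u x‖^2 := by simp [hG_def, hq_def]
    rw [hGsum]
    ring
  -- compute lap r x
  have hlapr : lap r x = 2*t*R*S - 2*G := by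
    have h1 : lap r x = -(lap (fun y => ‖u y‖^2) x) := lap_const_sub 1 x
    rw [h1, lap_normSq hu x]
    have h2 : ⟪lap u x, u x⟫ = -(t*R) * S := by
      rw [hlap_eq x hx, real_inner_smul_left, real_inner_self_eq_norm_sq]
      try simp only [hc_def, hR_def, hS_def]
      try ring
    rw [h2]
    have hGsum : G = ‖pd 0 u x‖^2 + ‖pd 1 u x‖^2 := by simp [hG_def, hq_def]
    rw [hGsum]
    ring
  -- compute lap (r^2) x
  have hlapr2 : lap (fun y => (r y)^2) x = 2*R*(2*t*R*S - 2*G) + 2*((P 0)^2 + (P 1)^2) := by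
    have h1 : (fun y => (r y)^2) = fun y => ‖r y‖^2 := by
      funext y; rw [Real.norm_eq_abs, sq_abs]
    rw [h1, lap_normSq hr x]
    have h2 : ⟪lap r x, r x⟫ = (2*t*R*S - 2*G) * R := by
      rw [RCLike.inner_apply, hlapr]
      try simp only [starRingEnd_apply, star_trivial]
      try ring
    rw [h2]
    have h3 : ∀ k : Fin 2, ‖pd k r x‖^2 = (P k)^2 := by
      intro k; rw [Real.norm_eq_abs, sq_abs]; try simp [hP_def]
    rw [h3 0, h3 1]
    ring
  -- total
  have hlapE : lap (fun y => eDens ε u y) x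
      = -(2*t*R*G) + t * ((P 0)^2 + (P 1)^2) + t^2*R^2*S
        + ((‖pd 0 (pd 0 u) x‖^2 + ‖pd 1 (pd 0 u) x‖^2)
           + (‖pd 0 (pd 1 u) x‖^2 + ‖pd 1 (pd 1 u) x‖^2)) := by
    have h0 : (fun y => eDens ε u y) = fun y => (1/2) * q y + t/4 * (r y)^2 := hefun
    rw [h0, lap_combo hq hr2 (1/2) (t/4) x, hlapq, hlapr2]
    ring
  -- the inequality
  have hRnn : 0 ≤ R := by
    have := hub x hx
    simp only [hR_def, hr_def]
    nlinarith [norm_nonneg (u x)]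
  have hSnn : 0 ≤ S := by positivity
  have hRS : R + S = 1 := by simp [hR_def, hr_def, hS_def]
  have hGnn : 0 ≤ G := by
    have : G = ‖pd 0 u x‖^2 + ‖pd 1 u x‖^2 := by simp [hG_def, hq_def]
    rw [this]; positivity
  have hkey := key_ineq t G R S ht hGnn hRnn hSnn hRS
  have heval : eDens ε u x = G/2 + t*R^2/4 := by
    simp only [eDens, gradSqNorm, Fin.sum_univ_two, hG_def, hq_def, hR_def, hr_def, ht_def]
    field_simp
  rw [heval, hlapE]
  have hnn : 0 ≤ t * ((P 0)^2 + (P 1)^2)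
      + ((‖pd 0 (pd 0 u) x‖^2 + ‖pd 1 (pd 0 u) x‖^2)
         + (‖pd 0 (pd 1 u) x‖^2 + ‖pd 1 (pd 1 u) x‖^2)) := by positivity
  nlinarith [hkey, hnn]
end
end

section
/- For every β ∈ (0,1) there exists a constant C > 0 (depending only on β) such that for all η ∈ (0,1) and all δ ∈ (0, η²): ∫_0^∞ ( λ({x ∈ ℝ² : δ/η ≤ |x| ≤ η and w(x) ≥ t}) )^{1/2} dt ≤ C, where w(x) = |x|^{-1}·( (|x|/η)^{β/2} + (δ/(η|x|))^{β/2} ) and λ denotes the two-dimensional Lebesgue measure. -/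
open MeasureTheory Metric Real

set_option maxHeartbeats 1600000
noncomputable section

/-- invert a power inequality -/
lemma my_rpow_inv {r s a : ℝ} (hr : 0 < r) (hs : 0 < s) (ha : a < 0)
    (h : s ≤ r ^ a) : r ≤ s ^ a⁻¹ := by
  have h1 : (r ^ a) ^ a⁻¹ ≤ s ^ a⁻¹ :=
    Real.rpow_le_rpow_of_nonpos hs h (inv_nonpos.mpr ha.le)
  rwa [← Real.rpow_mul hr.le, mul_inv_cancel₀ ha.ne, Real.rpow_one] at h1

lemma my_key_calc {k : ℝ} (hk : 0 < k) {s e : ℝ} (hes : e * s - e - 1 = 0) :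
    (2⁻¹ * k ^ s) ^ e * (2 / k) ^ (e + 1) = 2 := by
  have hA : (0:ℝ) < 2⁻¹ * k ^ s := by positivity
  have hB : (0:ℝ) < 2 / k := by positivity
  have hlog : e * Real.log (2⁻¹ * k ^ s) + (e + 1) * Real.log (2 / k) = Real.log 2 := by
    rw [Real.log_mul (by norm_num) (Real.rpow_pos_of_pos hk s).ne',
      Real.log_inv, Real.log_rpow hk, Real.log_div two_ne_zero hk.ne']
    have : (e * s - e - 1) * Real.log k = 0 := by rw [hes]; ring
    nlinarith [this]
  have := congrArg Real.exp hlog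
  rwa [Real.exp_add, ← Real.log_rpow hA, ← Real.log_rpow hB,
    Real.exp_log (Real.rpow_pos_of_pos hA e), Real.exp_log (Real.rpow_pos_of_pos hB (e+1)),
    Real.exp_log two_pos] at this

lemma my_ball_bound {R : ℝ} (hR : 0 ≤ R) {S : Set E2} (hS : S ⊆ closedBall 0 R) :
    (volume S) ^ ((1:ℝ)/2) ≤
      ENNReal.ofReal (Real.sqrt ((volume (closedBall (0:E2) 1)).toReal) * R) := by
  set V : ENNReal := volume (closedBall (0:E2) 1) with hV
  have hVtop : V ≠ ⊤ := (measure_closedBall_lt_top).ne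
  have hvol : volume S ≤ ENNReal.ofReal (R ^ 2) * V := by
    calc volume S ≤ volume (closedBall (0:E2) R) := measure_mono hS
    _ = ENNReal.ofReal (R ^ Module.finrank ℝ E2) * V := Measure.addHaar_closedBall' volume 0 hR
    _ = ENNReal.ofReal (R ^ 2) * V := by norm_num [finrank_euclideanSpace_fin]
  have h1 : (volume S) ^ ((1:ℝ)/2) ≤ (ENNReal.ofReal (R ^ 2 * V.toReal)) ^ ((1:ℝ)/2) := by
    apply ENNReal.rpow_le_rpow _ (by norm_num)
    rwa [ENNReal.ofReal_mul (by positivity), ENNReal.ofReal_toReal hVtop]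
  refine h1.trans_eq ?_
  rw [ENNReal.ofReal_rpow_of_nonneg (by positivity) (by norm_num)]
  congr 1
  rw [← Real.sqrt_eq_rpow, Real.sqrt_mul (by positivity), Real.sqrt_sq hR, mul_comm]

/-- uniform `L^{2,1}` bound for the neck weight
`w(x) = |x|⁻¹((|x|/η)^{β/2} + (δ/(η|x|))^{β/2})` on the neck annulus
`{δ/η ≤ |x| ≤ η}` (quantitative core of Corollary 3.2 of the paper). -/
theorem neck_weight_lorentz_L21_bound :
    ∀ β ∈ Set.Ioo (0 : ℝ) 1, ∃ C > (0 : ℝ),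
      ∀ η ∈ Set.Ioo (0 : ℝ) 1, ∀ δ ∈ Set.Ioo (0 : ℝ) (η ^ 2),
        (∫⁻ t in Set.Ioi (0 : ℝ),
            (volume {x : E2 | δ / η ≤ ‖x‖ ∧ ‖x‖ ≤ η ∧
                t ≤ ‖x‖⁻¹ * ((‖x‖ / η) ^ (β / 2) + (δ / (η * ‖x‖)) ^ (β / 2))})
              ^ ((1 : ℝ) / 2))
          ≤ ENNReal.ofReal C := by
  rintro β ⟨hβ0, hβ1⟩
  set Vr : ℝ := (volume (closedBall (0:E2) 1)).toReal with hVrdef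
  have hVr0 : 0 ≤ Real.sqrt Vr := Real.sqrt_nonneg _
  refine ⟨12 * (Real.sqrt Vr + 1) / β, by positivity, ?_⟩
  rintro η ⟨hη0, hη1⟩ δ ⟨hδ0, hδη2⟩
  have h2β : (0:ℝ) < 2 - β := by linarith
  have h2β' : (0:ℝ) < 2 + β := by linarith
  -- exponents
  set e1 : ℝ := -(2/(2-β)) with he1def
  set e2 : ℝ := -(2/(2+β)) with he2def
  have he1 : e1 < -1 := by
    rw [he1def, neg_lt_neg_iff]
    rw [lt_div_iff₀ h2β]; linarith
  have he2a : (-1:ℝ) < e2 := by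
    rw [he2def, neg_lt_neg_iff]
    rw [div_lt_one h2β']; linarith
  have he2b : e2 < 0 := by
    rw [he2def, neg_lt_zero]; positivity
  have he1p : e1 + 1 < 0 := by linarith
  have he2p : (0:ℝ) < e2 + 1 := by linarith
  -- basic positivity
  have hδη : 0 < δ / η := by positivity
  have hδηlt : δ / η < η := by rw [div_lt_iff₀ hη0]; nlinarith
  set t0 : ℝ := 2 / η with ht0def
  set T : ℝ := 2 / (δ / η) with hTdef
  have ht0pos : 0 < t0 := by positivity
  have hTpos : 0 < T := by positivity
  -- constants
  set c1 : ℝ := (2⁻¹ * η ^ (β/2)) ^ e1 with hc1def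
  set c2 : ℝ := (2⁻¹ * (δ/η) ^ (-(β/2))) ^ e2 with hc2def
  have hc1pos : 0 < c1 := Real.rpow_pos_of_pos (by positivity) _
  have hc2pos : 0 < c2 := Real.rpow_pos_of_pos (by positivity) _
  set D1 : ℝ := Real.sqrt Vr * c1 with hD1def
  set D2 : ℝ := Real.sqrt Vr * c2 with hD2def
  set S : ℝ → Set E2 := fun t => {x : E2 | δ / η ≤ ‖x‖ ∧ ‖x‖ ≤ η ∧
      t ≤ ‖x‖⁻¹ * ((‖x‖ / η) ^ (β / 2) + (δ / (η * ‖x‖)) ^ (β / 2))} with hSdef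
  -- inclusion in the ball of radius η
  have hsub1 : ∀ t : ℝ, S t ⊆ closedBall (0:E2) η := by
    intro t x hx
    exact mem_closedBall_zero_iff.mpr hx.2.1
  -- emptiness for large t
  have hempty : ∀ t : ℝ, T < t → S t = ∅ := by
    intro t hTt
    rw [Set.eq_empty_iff_forall_notMem]
    rintro x ⟨hr1, hr2, hw⟩
    set r : ℝ := ‖x‖ with hrdef
    have hr0 : 0 < r := lt_of_lt_of_le hδη hr1
    have hA : (r/η) ^ (β/2) ≤ 1 :=
      Real.rpow_le_one (by positivity) ((div_le_one hη0).mpr hr2) (by positivity)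
    have hB : (δ/(η*r)) ^ (β/2) ≤ 1 := by
      apply Real.rpow_le_one (by positivity) _ (by positivity)
      rw [div_le_one (by positivity)]
      calc δ = (δ/η) * η := by field_simp
      _ ≤ r * η := by nlinarith
      _ = η * r := by ring
    have hrinv : r⁻¹ ≤ (δ/η)⁻¹ := by
      exact inv_anti₀ hδη hr1
    have : t ≤ 2 / (δ/η) := by
      calc t ≤ r⁻¹ * ((r / η) ^ (β / 2) + (δ / (η * r)) ^ (β / 2)) := hw
      _ ≤ r⁻¹ * 2 := by
          apply mul_le_mul_of_nonneg_left (by linarith) (by positivity)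
      _ ≤ (δ/η)⁻¹ * 2 := by nlinarith
      _ = 2 / (δ/η) := by ring
    rw [← hTdef] at this
    linarith
  -- inclusion in the small ball
  have hsub2 : ∀ t : ℝ, 0 < t → S t ⊆ closedBall (0:E2) (c1 * t ^ e1 + c2 * t ^ e2) := by
    intro t ht x hx
    obtain ⟨hr1, hr2, hw⟩ := hx
    set r : ℝ := ‖x‖ with hrdef
    have hr0 : 0 < r := lt_of_lt_of_le hδη hr1
    rw [mem_closedBall_zero_iff]
    have hterm1 : 0 ≤ c1 * t ^ e1 := by positivity
    have hterm2 : 0 ≤ c2 * t ^ e2 := by positivity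
    have hor : t/2 ≤ r⁻¹ * (r / η) ^ (β / 2) ∨ t/2 ≤ r⁻¹ * (δ / (η * r)) ^ (β / 2) := by
      by_contra hcon
      push_neg at hcon
      have := hw
      rw [mul_add] at this
      linarith [hcon.1, hcon.2]
    rcases hor with hcase | hcase
    · -- first term dominates
      have hstep : (t/2) * η ^ (β/2) ≤ r ^ (β/2 - 1) := by
        have h1 : r⁻¹ * (r / η) ^ (β / 2) = r ^ (β/2 - 1) / η ^ (β/2) := by
          rw [Real.div_rpow hr0.le hη0.le]
          rw [← Real.rpow_neg_one r]
          rw [show r ^ (-1:ℝ) * (r ^ (β/2) / η ^ (β/2)) = r ^ (-1:ℝ) * r ^ (β/2) / η ^ (β/2) by ring]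
          rw [← Real.rpow_add hr0]
          ring_nf
        rw [h1] at hcase
        rw [le_div_iff₀ (Real.rpow_pos_of_pos hη0 _)] at hcase
        linarith [hcase]
      have hs1pos : 0 < (t/2) * η ^ (β/2) := by positivity
      have hinv := my_rpow_inv hr0 hs1pos (by linarith : β/2 - 1 < 0) hstep
      have hexp : (β/2 - 1)⁻¹ = e1 := by
        rw [he1def]
        rw [show β/2 - 1 = -((2-β)/2) by ring]
        rw [inv_neg, neg_inj, inv_div]
      rw [hexp] at hinv
      have hsplit : ((t/2) * η ^ (β/2)) ^ e1 = c1 * t ^ e1 := by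
        rw [show (t/2) * η ^ (β/2) = t * (2⁻¹ * η ^ (β/2)) by ring]
        rw [Real.mul_rpow ht.le (by positivity), hc1def, mul_comm]
      rw [hsplit] at hinv
      linarith
    · -- second term dominates
      have hstep : (t/2) * (δ/η) ^ (-(β/2)) ≤ r ^ (-1 - β/2) := by
        have h1 : r⁻¹ * (δ / (η * r)) ^ (β / 2) = (δ/η) ^ (β/2) * r ^ (-1 - β/2) := by
          rw [show δ / (η * r) = (δ/η) / r by ring]
          rw [Real.div_rpow (by positivity) hr0.le]
          rw [div_eq_mul_inv, ← Real.rpow_neg hr0.le, ← Real.rpow_neg_one r]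
          rw [show r ^ (-1:ℝ) * ((δ/η) ^ (β/2) * r ^ (-(β/2))) =
            (δ/η) ^ (β/2) * (r ^ (-1:ℝ) * r ^ (-(β/2))) by ring]
          rw [← Real.rpow_add hr0]
          ring_nf
        rw [h1] at hcase
        have hmul := mul_le_mul_of_nonneg_right hcase
          (le_of_lt (Real.rpow_pos_of_pos hδη (-(β/2))))
        calc (t/2) * (δ/η) ^ (-(β/2)) ≤
            (δ/η) ^ (β/2) * r ^ (-1 - β/2) * (δ/η) ^ (-(β/2)) := hmul
        _ = r ^ (-1 - β/2) * ((δ/η) ^ (β/2) * (δ/η) ^ (-(β/2))) := by ring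
        _ = r ^ (-1 - β/2) := by
            rw [← Real.rpow_add hδη]; norm_num
      have hs2pos : 0 < (t/2) * (δ/η) ^ (-(β/2)) := by positivity
      have hinv := my_rpow_inv hr0 hs2pos (by linarith : -1 - β/2 < 0) hstep
      have hexp : (-1 - β/2)⁻¹ = e2 := by
        rw [he2def]
        rw [show -1 - β/2 = -((2+β)/2) by ring]
        rw [inv_neg, neg_inj, inv_div]
      rw [hexp] at hinv
      have hsplit : ((t/2) * (δ/η) ^ (-(β/2))) ^ e2 = c2 * t ^ e2 := by
        rw [show (t/2) * (δ/η) ^ (-(β/2)) = t * (2⁻¹ * (δ/η) ^ (-(β/2))) by ring]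
        rw [Real.mul_rpow ht.le (by positivity), hc2def, mul_comm]
      rw [hsplit] at hinv
      linarith
  -- the dominating function on (t0, ∞)
  set g : ℝ → ENNReal := fun t => ENNReal.ofReal (D1 * t ^ e1) +
      (Set.Ioc t0 T).indicator (fun t => ENNReal.ofReal (D2 * t ^ e2)) t with hgdef
  have hmeas1 : Measurable fun t : ℝ => ENNReal.ofReal (D1 * t ^ e1) := by
    measurability
  have hmeas2 : Measurable fun t : ℝ => ENNReal.ofReal (D2 * t ^ e2) := by
    measurability
  have hgmeas : Measurable g := by
    apply hmeas1.add
    exact hmeas2.indicator measurableSet_Ioc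
  -- pointwise bound on (t0, ∞)
  have hFg : ∀ t ∈ Set.Ioi t0, (volume (S t)) ^ ((1:ℝ)/2) ≤ g t := by
    intro t ht
    have ht' : t0 < t := ht
    have htpos : 0 < t := lt_trans ht0pos ht'
    by_cases hT : t ≤ T
    · have hb := my_ball_bound (by positivity) (hsub2 t htpos)
      rw [← hVrdef] at hb
      refine hb.trans ?_
      simp only [hgdef]
      have hmem : t ∈ Set.Ioc t0 T := ⟨ht', hT⟩
      rw [Set.indicator_of_mem hmem]
      rw [show Real.sqrt Vr * (c1 * t ^ e1 + c2 * t ^ e2) =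
          D1 * t ^ e1 + D2 * t ^ e2 by rw [hD1def, hD2def]; ring]
      rw [ENNReal.ofReal_add (by positivity) (by positivity)]
    · push_neg at hT
      rw [hempty t hT]
      simp only [measure_empty]
      rw [ENNReal.zero_rpow_of_pos (by norm_num)]
      exact zero_le
  -- key integral values
  have hkey1 : c1 * (2/η) ^ (e1+1) = 2 := by
    apply my_key_calc hη0
    rw [he1def]; field_simp; ring
  have hkey2 : c2 * (2/(δ/η)) ^ (e2+1) = 2 := by
    apply my_key_calc hδη
    rw [he2def]; field_simp; ring
  -- the first lintegral
  have hL1 : (∫⁻ t in Set.Ioi t0, ENNReal.ofReal (D1 * t ^ e1)) ≤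
      ENNReal.ofReal (Real.sqrt Vr * (2*(2-β)/β)) := by
    have hInt : IntegrableOn (fun t : ℝ => D1 * t ^ e1) (Set.Ioi t0) :=
      (integrableOn_Ioi_rpow_of_lt he1 ht0pos).const_mul D1
    have hnn : 0 ≤ᵐ[volume.restrict (Set.Ioi t0)] fun t : ℝ => D1 * t ^ e1 := by
      filter_upwards [ae_restrict_mem measurableSet_Ioi] with t ht
      have : (0:ℝ) < t := lt_trans ht0pos ht
      positivity
    rw [← ofReal_integral_eq_lintegral_ofReal hInt hnn]
    apply ENNReal.ofReal_le_ofReal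
    rw [MeasureTheory.integral_const_mul, integral_Ioi_rpow_of_lt he1 ht0pos]
    have hval : c1 * (-t0 ^ (e1 + 1) / (e1 + 1)) = 2 * (2-β)/β := by
      have ht0e : c1 * t0 ^ (e1+1) = 2 := by rw [ht0def]; exact hkey1
      have he1v : e1 + 1 = -(β/(2-β)) := by rw [he1def]; field_simp; try ring
      have hX : t0 ^ (e1+1) = 2 / c1 := by
        rw [eq_div_iff (ne_of_gt hc1pos)]; linarith [ht0e]
      rw [hX, he1v]
      field_simp
      try ring
    have : D1 * (-t0 ^ (e1 + 1) / (e1 + 1)) = Real.sqrt Vr * (2*(2-β)/β) := by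
      rw [hD1def, mul_assoc, hval]
    exact this.le
  -- the second lintegral
  have hL2 : (∫⁻ t in Set.Ioc (0:ℝ) T, ENNReal.ofReal (D2 * t ^ e2)) ≤
      ENNReal.ofReal (Real.sqrt Vr * (2*(2+β)/β)) := by
    have hII : IntervalIntegrable (fun t : ℝ => t ^ e2) volume 0 T :=
      intervalIntegral.intervalIntegrable_rpow' he2a
    have hInt : IntegrableOn (fun t : ℝ => D2 * t ^ e2) (Set.Ioc (0:ℝ) T) :=
      hII.1.const_mul D2
    have hnn : 0 ≤ᵐ[volume.restrict (Set.Ioc (0:ℝ) T)] fun t : ℝ => D2 * t ^ e2 := by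
      filter_upwards [ae_restrict_mem measurableSet_Ioc] with t ht
      have : (0:ℝ) < t := ht.1
      positivity
    rw [← ofReal_integral_eq_lintegral_ofReal hInt hnn]
    apply ENNReal.ofReal_le_ofReal
    rw [MeasureTheory.integral_const_mul]
    rw [← intervalIntegral.integral_of_le hTpos.le]
    rw [integral_rpow (Or.inl he2a)]
    rw [Real.zero_rpow (ne_of_gt he2p)]
    have hval : c2 * ((T ^ (e2 + 1) - 0) / (e2 + 1)) = 2 * (2+β)/β := by
      have hTe : c2 * T ^ (e2+1) = 2 := by rw [hTdef]; exact hkey2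
      have he2v : e2 + 1 = β/(2+β) := by rw [he2def]; field_simp; try ring
      have hX : T ^ (e2+1) = 2 / c2 := by
        rw [eq_div_iff (ne_of_gt hc2pos)]; linarith [hTe]
      rw [hX, he2v]
      field_simp
      try ring
    have : D2 * ((T ^ (e2 + 1) - 0) / (e2 + 1)) = Real.sqrt Vr * (2*(2+β)/β) := by
      rw [hD2def, mul_assoc, hval]
    exact this.le
  -- split the integral
  have hsplit : (∫⁻ t in Set.Ioi (0:ℝ), (volume (S t)) ^ ((1:ℝ)/2)) =
      (∫⁻ t in Set.Ioc (0:ℝ) t0, (volume (S t)) ^ ((1:ℝ)/2)) +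
      (∫⁻ t in Set.Ioi t0, (volume (S t)) ^ ((1:ℝ)/2)) := by
    rw [← Set.Ioc_union_Ioi_eq_Ioi ht0pos.le]
    exact lintegral_union measurableSet_Ioi (Set.Ioc_disjoint_Ioi le_rfl)
  -- piece A
  have hA : (∫⁻ t in Set.Ioc (0:ℝ) t0, (volume (S t)) ^ ((1:ℝ)/2)) ≤
      ENNReal.ofReal (2 * Real.sqrt Vr) := by
    calc (∫⁻ t in Set.Ioc (0:ℝ) t0, (volume (S t)) ^ ((1:ℝ)/2))
        ≤ ∫⁻ _ in Set.Ioc (0:ℝ) t0, ENNReal.ofReal (Real.sqrt Vr * η) :=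
          setLIntegral_mono measurable_const (fun t _ => my_ball_bound hη0.le (hsub1 t))
    _ = ENNReal.ofReal (Real.sqrt Vr * η) * volume (Set.Ioc (0:ℝ) t0) :=
          setLIntegral_const _ _
    _ = ENNReal.ofReal (Real.sqrt Vr * η) * ENNReal.ofReal (t0 - 0) := by
          rw [Real.volume_Ioc]
    _ = ENNReal.ofReal (Real.sqrt Vr * η * (t0 - 0)) := by
          rw [← ENNReal.ofReal_mul (by positivity)]
    _ = ENNReal.ofReal (2 * Real.sqrt Vr) := by
          congr 1
          rw [ht0def, sub_zero]
          field_simp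
          try ring
  -- piece B
  have hB : (∫⁻ t in Set.Ioi t0, (volume (S t)) ^ ((1:ℝ)/2)) ≤
      ENNReal.ofReal (Real.sqrt Vr * (2*(2-β)/β)) +
      ENNReal.ofReal (Real.sqrt Vr * (2*(2+β)/β)) := by
    calc (∫⁻ t in Set.Ioi t0, (volume (S t)) ^ ((1:ℝ)/2))
        ≤ ∫⁻ t in Set.Ioi t0, g t := setLIntegral_mono hgmeas hFg
    _ = (∫⁻ t in Set.Ioi t0, ENNReal.ofReal (D1 * t ^ e1)) +
        (∫⁻ t in Set.Ioi t0,
          (Set.Ioc t0 T).indicator (fun t => ENNReal.ofReal (D2 * t ^ e2)) t) := by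
        rw [hgdef]
        exact lintegral_add_left hmeas1 _
    _ ≤ ENNReal.ofReal (Real.sqrt Vr * (2*(2-β)/β)) +
        ENNReal.ofReal (Real.sqrt Vr * (2*(2+β)/β)) := by
        apply add_le_add hL1
        rw [lintegral_indicator measurableSet_Ioc]
        rw [Measure.restrict_restrict measurableSet_Ioc]
        rw [Set.inter_eq_left.mpr Set.Ioc_subset_Ioi_self]
        refine le_trans (lintegral_mono_set (Set.Ioc_subset_Ioc_left ht0pos.le)) hL2
  -- conclusion
  rw [hsplit]
  calc (∫⁻ t in Set.Ioc (0:ℝ) t0, (volume (S t)) ^ ((1:ℝ)/2)) +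
      (∫⁻ t in Set.Ioi t0, (volume (S t)) ^ ((1:ℝ)/2))
      ≤ ENNReal.ofReal (2 * Real.sqrt Vr) +
        (ENNReal.ofReal (Real.sqrt Vr * (2*(2-β)/β)) +
         ENNReal.ofReal (Real.sqrt Vr * (2*(2+β)/β))) := add_le_add hA hB
  _ = ENNReal.ofReal (2 * Real.sqrt Vr +
        (Real.sqrt Vr * (2*(2-β)/β) + Real.sqrt Vr * (2*(2+β)/β))) := by
      rw [← ENNReal.ofReal_add (by positivity) (by positivity),
        ← ENNReal.ofReal_add (by positivity) (by positivity)]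
  _ ≤ ENNReal.ofReal (12 * (Real.sqrt Vr + 1) / β) := by
      apply ENNReal.ofReal_le_ofReal
      rw [le_div_iff₀ hβ0]
      have h1 : 0 ≤ Real.sqrt Vr * (1 - β) := mul_nonneg hVr0 (by linarith)
      have h2 : Real.sqrt Vr * (2*(2-β)/β) * β = Real.sqrt Vr * (2*(2-β)) := by
        field_simp
      have h3 : Real.sqrt Vr * (2*(2+β)/β) * β = Real.sqrt Vr * (2*(2+β)) := by
        field_simp
      nlinarith [h1, h2, h3, hVr0, hβ0, hβ1]
end
end
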